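/- Let X be a vector space over ℂ, let R₁, R₂, R₃, R₄, A∘, B∘, I∘ : X → X be ℂ-linear maps with R₁ bijective and I∘ ∘ R₁ = I∘, set I⋆ = I − I∘, and let g ∈ X. Then the map sending ρ̃ ∈ X to the pair (ρ̃₁, ρ̃₂) = (ρ̃ + R₁⁻¹ R₃ B∘ R₁ ρ̃, −B∘ R₁ ρ̃) is a bijection from the solution set of the reduced single-density equation (I⋆ − A∘(R₄ − R₂ R₁⁻¹ R₃) B∘ R₁ + A∘ R₂ + R₁⁻¹ R₃ B∘ R₁) ρ̃ = g onto the solution set of the compressed 2×2 block system consisting of the equations ρ̃₁ − I∘(R₁ ρ̃₁ + R₃ ρ̃₂) + A∘(R₂ ρ̃₁ + R₄ ρ̃₂) = g and ρ̃₂ + B∘(R₁ ρ̃₁ + R₃ ρ̃₂) = 0; its inverse sends (ρ̃₁, ρ̃₂) to ρ̃ = ρ̃₁ + R₁⁻¹ R₃ ρ̃₂. -/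
import Mathlib


/-- With `R₁` bijective with (two-sided) inverse `R1inv` and
`I∘ ∘ R₁ = I∘`, `I⋆ = I − I∘`, the map
`ρ̃ ↦ (ρ̃ + R₁⁻¹R₃B∘R₁ ρ̃, −B∘R₁ ρ̃)` is a bijection from the solution set of
the reduced single-density equation
`(I⋆ − A∘(R₄ − R₂R₁⁻¹R₃)B∘R₁ + A∘R₂ + R₁⁻¹R₃B∘R₁) ρ̃ = g`
onto the solution set of the compressed 2×2 block system, with inverse
`(ρ̃₁, ρ̃₂) ↦ ρ̃₁ + R₁⁻¹ R₃ ρ̃₂`. -/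
theorem rcip_reduced_equation_bijection
    (X : Type*) [AddCommGroup X] [Module ℂ X]
    (R₁ R₂ R₃ R₄ Acirc Bcirc Icirc Istar R1inv : X →ₗ[ℂ] X)
    (hleft : R1inv ∘ₗ R₁ = LinearMap.id)
    (hright : R₁ ∘ₗ R1inv = LinearMap.id)
    (hIcirc : Icirc ∘ₗ R₁ = Icirc)
    (hIstar : Istar = (LinearMap.id : X →ₗ[ℂ] X) - Icirc)
    (g : X) :
    Set.BijOn
      (fun ρ : X => (ρ + R1inv (R₃ (Bcirc (R₁ ρ))), -(Bcirc (R₁ ρ))))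
      {ρ : X |
        Istar ρ - Acirc ((R₄ - R₂ ∘ₗ R1inv ∘ₗ R₃) (Bcirc (R₁ ρ)))
          + Acirc (R₂ ρ) + R1inv (R₃ (Bcirc (R₁ ρ))) = g}
      {p : X × X |
        p.1 - Icirc (R₁ p.1 + R₃ p.2) + Acirc (R₂ p.1 + R₄ p.2) = g ∧
        p.2 + Bcirc (R₁ p.1 + R₃ p.2) = 0} ∧
    Set.InvOn (fun p : X × X => p.1 + R1inv (R₃ p.2))
      (fun ρ : X => (ρ + R1inv (R₃ (Bcirc (R₁ ρ))), -(Bcirc (R₁ ρ))))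
      {ρ : X |
        Istar ρ - Acirc ((R₄ - R₂ ∘ₗ R1inv ∘ₗ R₃) (Bcirc (R₁ ρ)))
          + Acirc (R₂ ρ) + R1inv (R₃ (Bcirc (R₁ ρ))) = g}
      {p : X × X |
        p.1 - Icirc (R₁ p.1 + R₃ p.2) + Acirc (R₂ p.1 + R₄ p.2) = g ∧
        p.2 + Bcirc (R₁ p.1 + R₃ p.2) = 0} := by
  have hL : ∀ x, R1inv (R₁ x) = x := fun x => by
    simpa using LinearMap.congr_fun hleft x
  have hR : ∀ x, R₁ (R1inv x) = x := fun x => by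
    simpa using LinearMap.congr_fun hright x
  have hI : ∀ x, Icirc (R₁ x) = Icirc x := fun x => by
    simpa using LinearMap.congr_fun hIcirc x
  have key1 : ∀ ρ : X, R₁ (ρ + R1inv (R₃ (Bcirc (R₁ ρ)))) + R₃ (-(Bcirc (R₁ ρ))) = R₁ ρ := by
    intro ρ
    simp [map_add, map_neg, hR]
  -- forward maps-to
  have hfw : Set.MapsTo
      (fun ρ : X => (ρ + R1inv (R₃ (Bcirc (R₁ ρ))), -(Bcirc (R₁ ρ))))
      {ρ : X |
        Istar ρ - Acirc ((R₄ - R₂ ∘ₗ R1inv ∘ₗ R₃) (Bcirc (R₁ ρ)))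
          + Acirc (R₂ ρ) + R1inv (R₃ (Bcirc (R₁ ρ))) = g}
      {p : X × X |
        p.1 - Icirc (R₁ p.1 + R₃ p.2) + Acirc (R₂ p.1 + R₄ p.2) = g ∧
        p.2 + Bcirc (R₁ p.1 + R₃ p.2) = 0} := by
    intro ρ hρ
    simp only [Set.mem_setOf_eq, hIstar, LinearMap.sub_apply, LinearMap.id_apply,
      LinearMap.comp_apply] at hρ ⊢
    refine ⟨?_, by rw [key1]; simp⟩
    rw [key1, hI, ← hρ]
    simp only [map_add, map_neg, map_sub]
    abel
  -- backward maps-to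
  have hbw : Set.MapsTo (fun p : X × X => p.1 + R1inv (R₃ p.2))
      {p : X × X |
        p.1 - Icirc (R₁ p.1 + R₃ p.2) + Acirc (R₂ p.1 + R₄ p.2) = g ∧
        p.2 + Bcirc (R₁ p.1 + R₃ p.2) = 0}
      {ρ : X |
        Istar ρ - Acirc ((R₄ - R₂ ∘ₗ R1inv ∘ₗ R₃) (Bcirc (R₁ ρ)))
          + Acirc (R₂ ρ) + R1inv (R₃ (Bcirc (R₁ ρ))) = g} := by
    rintro ⟨p₁, p₂⟩ ⟨h1, h2⟩
    simp only [Set.mem_setOf_eq] at h1 h2 ⊢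
    have hr : R₁ (p₁ + R1inv (R₃ p₂)) = R₁ p₁ + R₃ p₂ := by simp [map_add, hR]
    have hB : Bcirc (R₁ (p₁ + R1inv (R₃ p₂))) = -p₂ := by
      rw [hr]
      exact eq_neg_of_add_eq_zero_right h2
    have hIc : Icirc (R1inv (R₃ p₂)) = Icirc (R₃ p₂) := by
      rw [← hI (R1inv (R₃ p₂)), hR]
    rw [hIstar, hB, ← h1]
    simp only [LinearMap.sub_apply, LinearMap.id_apply, LinearMap.comp_apply,
      map_add, map_neg, map_sub, hIc, hI]
    abel
  have hinv : Set.InvOn (fun p : X × X => p.1 + R1inv (R₃ p.2))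
      (fun ρ : X => (ρ + R1inv (R₃ (Bcirc (R₁ ρ))), -(Bcirc (R₁ ρ))))
      {ρ : X |
        Istar ρ - Acirc ((R₄ - R₂ ∘ₗ R1inv ∘ₗ R₃) (Bcirc (R₁ ρ)))
          + Acirc (R₂ ρ) + R1inv (R₃ (Bcirc (R₁ ρ))) = g}
      {p : X × X |
        p.1 - Icirc (R₁ p.1 + R₃ p.2) + Acirc (R₂ p.1 + R₄ p.2) = g ∧
        p.2 + Bcirc (R₁ p.1 + R₃ p.2) = 0} := by
    constructor
    · intro ρ _
      simp [map_neg]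
    · rintro ⟨p₁, p₂⟩ ⟨h1, h2⟩
      have hr : R₁ (p₁ + R1inv (R₃ p₂)) = R₁ p₁ + R₃ p₂ := by simp [map_add, hR]
      have hB : Bcirc (R₁ (p₁ + R1inv (R₃ p₂))) = -p₂ := by
        rw [hr]; exact eq_neg_of_add_eq_zero_right h2
      simp only [hB, map_neg, neg_neg, Prod.mk.injEq]
      exact ⟨by abel, trivial⟩
  exact ⟨hinv.bijOn hfw hbw, hinv⟩
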